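/- Fix real numbers 0 ≤ λ1 < λ2 < 1. For all Φ1, Φ2 ∈ ℝ and every positive integer t, sup over θ ∈ ℝ and β0, β1 ∈ 𝔻 of ‖E_{Φ1,θ,β0,β1}^t δ_0 − E_{Φ2,θ,β0,β1}^t δ_0‖ is at most 2π·λ2·|Φ1 − Φ2|·t². -/

import Mathlib

/-!
The even Verblunsky coefficients of the two operators agree, so `E₁ - E₂ = L (M₁ - M₂)` with the
same `L`, which preserves `ℓ²` norms. `M₁ - M₂` acts on each pair `{2m+1, 2m+2}` by the block
`[[conj a, r], [r, -a]]` of the differences `a` of `α_{2m+1}` and `r` of `ρ_{2m+1}`, whose norm is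
`√(|a|² + r²)`. For `α = λ₂ sin v` the point `(α, ρ)` runs along the unit circle with speed at most
`λ₂`, so this block has norm at most `2πλ₂|m+1||Φ₁ - Φ₂|`. Since `E₂ᵏ δ₀` is supported in
`[-2k, 2k]`, only blocks with `|m+1| ≤ k < t` see it, so each term of the telescoping sum
`E₁ᵗ - E₂ᵗ = ∑_{k<t} E₁^{t-1-k} (E₁ - E₂) E₂ᵏ` contributes at most `2πλ₂|Φ₁ - Φ₂| t`.
-/

open scoped ENNReal ComplexConjugate Classical
open Filter MeasureTheory

noncomputable section

abbrev l2Z : Type := lp (fun _ : ℤ => ℂ) 2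

/-- The standard basis vector `δ_n` of `ℓ²(ℤ)`. -/
def deltaVec (n : ℤ) : l2Z := lp.single 2 n 1

/-- Membership in the domain of the position operator `X`. -/
def InDomX (ψ : l2Z) : Prop := Memℓp (fun n : ℤ => (n : ℂ) * ψ n) 2

/-- The position operator `X`, defined (with junk value `0` off its domain). -/
def posX (ψ : l2Z) : l2Z :=
  if h : InDomX ψ then (⟨fun n : ℤ => (n : ℂ) * ψ n, h⟩ : l2Z) else 0

/-- `‖X ψ‖²`, computed as an extended real (possibly `+∞`). -/
def XnormSq (ψ : l2Z) : ℝ≥0∞ := ∑' n : ℤ, ENNReal.ofReal ((n : ℝ) ^ 2 * ‖ψ n‖ ^ 2)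

/-- `ρ_n = √(1 - |α_n|²)`. -/
def cmvRho (α : ℤ → ℂ) (n : ℤ) : ℝ := Real.sqrt (1 - ‖α n‖ ^ 2)

/-- The pointwise action of `M = ⊕ₙ Θ(α_{2n+1})` (blocks acting on the pairs
`{2n+1, 2n+2}`): a block `Θ(α_j)` acts on `span{δ_j, δ_{j+1}}` by the matrix
`[[conj α_j, ρ_j], [ρ_j, -α_j]]`. -/
def cmvMApply (α : ℤ → ℂ) (ψ : ℤ → ℂ) : ℤ → ℂ := fun n =>
  if Odd n then conj (α n) * ψ n + (cmvRho α n : ℂ) * ψ (n + 1)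
  else (cmvRho α (n - 1) : ℂ) * ψ (n - 1) - α (n - 1) * ψ n

/-- The pointwise action of `L = ⊕ₙ Θ(α_{2n})` (blocks acting on the pairs `{2n, 2n+1}`). -/
def cmvLApply (α : ℤ → ℂ) (ψ : ℤ → ℂ) : ℤ → ℂ := fun n =>
  if Even n then conj (α n) * ψ n + (cmvRho α n : ℂ) * ψ (n + 1)
  else (cmvRho α (n - 1) : ℂ) * ψ (n - 1) - α (n - 1) * ψ n

/-- `E` is the extended CMV matrix with Verblunsky coefficients `α`: a unitary operator on
`ℓ²(ℤ)` acting pointwise as `E = L M`. -/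
def IsECMV (α : ℤ → ℂ) (E : l2Z →L[ℂ] l2Z) : Prop :=
  E ∈ unitary (l2Z →L[ℂ] l2Z) ∧
    ∀ ψ : l2Z, ∀ n : ℤ, (E ψ) n = cmvLApply α (cmvMApply α (fun m => ψ m)) n

/-- The Verblunsky coefficients of the (locally perturbed) unitary almost-Mathieu operator:
`α₀ = β₀`, `α₁ = β₁`, `α_{2n-1} = λ₂ sin(2π(nΦ+θ))` for `n ≠ 1`, and `α_{2n} = √(1-λ₁²)`
for `n ≠ 0`. -/
def uamoAlpha (lam1 lam2 Phi theta : ℝ) (beta0 beta1 : ℂ) : ℤ → ℂ := fun n =>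
  if n = 0 then beta0
  else if n = 1 then beta1
  else if Odd n then
    ((lam2 * Real.sin (2 * Real.pi * ((((n + 1) / 2 : ℤ) : ℝ) * Phi + theta)) : ℝ) : ℂ)
  else ((Real.sqrt (1 - lam1 ^ 2) : ℝ) : ℂ)

open Complex (I)

lemma hasDerivAt_sqrt_one_sub_sq_sin (lam u : ℝ) (hlam : lam ^ 2 < 1) :
    HasDerivAt (fun v => √(1 - (lam * Real.sin v) ^ 2))
      (-(lam ^ 2 * Real.sin u * Real.cos u) / √(1 - (lam * Real.sin u) ^ 2)) u := by
  have hpos : 0 < 1 - (lam * Real.sin u) ^ 2 := by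
    nlinarith [Real.sin_sq_le_one u, sq_nonneg (Real.sin u), sq_nonneg lam]
  have h : HasDerivAt (fun v => 1 - (lam * Real.sin v) ^ 2)
      (-(2 * (lam * Real.sin u) * (lam * Real.cos u))) u := by
    simpa using (((Real.hasDerivAt_sin u).const_mul lam).fun_pow 2).const_sub 1
  convert h.sqrt hpos.ne' using 1
  field_simp

lemma norm_sq_add_mul_I (x y : ℝ) : ‖(x : ℂ) + y * I‖ ^ 2 = x ^ 2 + y ^ 2 := by
  rw [Complex.sq_norm, Complex.normSq_add_mul_I]

lemma sq_sub_sin_add_sq_sub_sqrt_le (lam x y : ℝ) (hlam : lam ^ 2 < 1) :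
    (lam * Real.sin x - lam * Real.sin y) ^ 2
        + (√(1 - (lam * Real.sin x) ^ 2) - √(1 - (lam * Real.sin y) ^ 2)) ^ 2
      ≤ lam ^ 2 * (x - y) ^ 2 := by
  set ρ : ℝ → ℝ := fun v => √(1 - (lam * Real.sin v) ^ 2)
  set ρ' : ℝ → ℝ := fun u => -(lam ^ 2 * Real.sin u * Real.cos u) / ρ u
  have hρ : ∀ u, 0 < ρ u ^ 2 ∧ ρ u ^ 2 = 1 - (lam * Real.sin u) ^ 2 := fun u => by
    have : 0 < 1 - (lam * Real.sin u) ^ 2 := by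
      nlinarith [Real.sin_sq_le_one u, sq_nonneg (Real.sin u), sq_nonneg lam]
    have hsq : ρ u ^ 2 = 1 - (lam * Real.sin u) ^ 2 := Real.sq_sqrt this.le
    exact ⟨hsq ▸ this, hsq⟩
  set g : ℝ → ℂ := fun v => ((lam * Real.sin v : ℝ) : ℂ) + (ρ v : ℂ) * I
  have hderiv : ∀ u, HasDerivAt g ((lam * Real.cos u : ℝ) + (ρ' u : ℂ) * I) u := fun u =>
    ((Real.hasDerivAt_sin u).const_mul lam).ofReal_comp.add
      ((hasDerivAt_sqrt_one_sub_sq_sin lam u hlam).ofReal_comp.mul_const I)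
  have hbound : ∀ u, ‖((lam * Real.cos u : ℝ) : ℂ) + (ρ' u : ℂ) * I‖ ≤ |lam| := fun u => by
    obtain ⟨hpos, hsq⟩ := hρ u
    have hcos : Real.cos u ^ 2 ≤ ρ u ^ 2 := by
      nlinarith [Real.sin_sq_add_cos_sq u, sq_nonneg (Real.sin u), sq_nonneg lam]
    have : (lam * Real.cos u) ^ 2 + ρ' u ^ 2 ≤ |lam| ^ 2 := by
      simp only [ρ', div_pow, sq_abs]
      rw [add_div' _ _ _ hpos.ne', div_le_iff₀ hpos]
      nlinarith [mul_le_mul_of_nonneg_left hcos (sq_nonneg lam), Real.sin_sq_add_cos_sq u]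
    rw [← norm_sq_add_mul_I] at this
    exact (pow_le_pow_iff_left₀ (norm_nonneg _) (abs_nonneg _) two_ne_zero).1 this
  have hmvt := (convex_univ : Convex ℝ Set.univ).norm_image_sub_le_of_norm_hasDerivWithin_le
    (fun u _ => (hderiv u).hasDerivWithinAt) (fun u _ => hbound u) (Set.mem_univ y)
    (Set.mem_univ x)
  have hchord :
      g x - g y = ((lam * Real.sin x - lam * Real.sin y : ℝ) : ℂ) + ((ρ x - ρ y : ℝ) : ℂ) * I := by
    simp only [g]
    push_cast
    ring
  have key := pow_le_pow_left₀ (norm_nonneg _) hmvt 2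
  rwa [hchord, norm_sq_add_mul_I, mul_pow, sq_abs, Real.norm_eq_abs, sq_abs] at key

lemma norm_sq_add_norm_sq_block (a : ℂ) (r : ℝ) (x y : ℂ) :
    ‖conj a * x + r * y‖ ^ 2 + ‖r * x - a * y‖ ^ 2 = (‖a‖ ^ 2 + r ^ 2) * (‖x‖ ^ 2 + ‖y‖ ^ 2) := by
  simp only [Complex.sq_norm, Complex.normSq_apply, Complex.add_re, Complex.mul_re,
    Complex.conj_re, Complex.conj_im, Complex.ofReal_re, Complex.ofReal_im, Complex.add_im,
    Complex.mul_im, Complex.sub_re, Complex.sub_im]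
  ring

lemma ENNReal.tsum_int_eq_tsum_pairs (c : ℤ) (f : ℤ → ℝ≥0∞) :
    ∑' n, f n = ∑' m, (f (2 * m + c) + f (2 * m + c + 1)) := by
  rw [← (Equiv.addRight c).tsum_eq, ← (Int.divModEquiv 2).symm.tsum_eq, ENNReal.tsum_prod']
  refine tsum_congr fun m => ?_
  simp [tsum_fintype, Fin.sum_univ_two, mul_comm, add_right_comm _ (1 : ℤ)]

section CMV

variable (α : ℤ → ℂ) (f : ℤ → ℂ) (m : ℤ)

lemma cmvRho_sq {n : ℤ} (h : ‖α n‖ ≤ 1) : cmvRho α n ^ 2 = 1 - ‖α n‖ ^ 2 :=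
  Real.sq_sqrt (by nlinarith [norm_nonneg (α n)])

lemma cmvLApply_two_mul :
    cmvLApply α f (2 * m) = conj (α (2 * m)) * f (2 * m) + cmvRho α (2 * m) * f (2 * m + 1) := by
  simp [cmvLApply]

lemma cmvLApply_two_mul_add_one :
    cmvLApply α f (2 * m + 1) = cmvRho α (2 * m) * f (2 * m) - α (2 * m) * f (2 * m + 1) := by
  simp [cmvLApply]

lemma cmvMApply_two_mul_add_one :
    cmvMApply α f (2 * m + 1)
      = conj (α (2 * m + 1)) * f (2 * m + 1) + cmvRho α (2 * m + 1) * f (2 * m + 2) := by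
  simp [cmvMApply, add_assoc, one_add_one_eq_two]

lemma cmvMApply_two_mul_add_two :
    cmvMApply α f (2 * m + 2)
      = cmvRho α (2 * m + 1) * f (2 * m + 1) - α (2 * m + 1) * f (2 * m + 2) := by
  simp [cmvMApply, show 2 * m + 2 - 1 = 2 * m + 1 by ring]

lemma cmvLApply_sub (g : ℤ → ℂ) : cmvLApply α f - cmvLApply α g = cmvLApply α (f - g) := by
  ext n
  simp only [cmvLApply, Pi.sub_apply]
  split_ifs <;> ring

end CMV

lemma cmvLApply_congr {α β : ℤ → ℂ} (h : ∀ n, Even n → α n = β n) (f : ℤ → ℂ) :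
    cmvLApply α f = cmvLApply β f := by
  ext n
  by_cases hn : Even n
  · simp [cmvLApply, cmvRho, hn, h n hn]
  · have hn' : Even (n - 1) := by simpa [Int.even_sub_one] using hn
    simp [cmvLApply, cmvRho, hn, h _ hn']

def l2NormSq (f : ℤ → ℂ) : ℝ≥0∞ := ∑' n, ENNReal.ofReal (‖f n‖ ^ 2)

lemma l2NormSq_coe (w : l2Z) : l2NormSq w = ENNReal.ofReal (‖w‖ ^ 2) := by
  have hsum : HasSum (fun n => ‖w n‖ ^ 2) (‖w‖ ^ 2) := by
    simpa using lp.hasSum_norm (p := 2) (by norm_num) w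
  rw [l2NormSq, ← hsum.tsum_eq]
  exact (ENNReal.ofReal_tsum_of_nonneg (fun n => by positivity) hsum.summable).symm

lemma l2NormSq_eq_tsum_pairs (c : ℤ) (f : ℤ → ℂ) :
    l2NormSq f = ∑' m, ENNReal.ofReal (‖f (2 * m + c)‖ ^ 2 + ‖f (2 * m + c + 1)‖ ^ 2) := by
  rw [l2NormSq, ENNReal.tsum_int_eq_tsum_pairs c]
  exact tsum_congr fun m => (ENNReal.ofReal_add (by positivity) (by positivity)).symm

lemma l2NormSq_cmvLApply {α : ℤ → ℂ} (hα : ∀ n, Even n → ‖α n‖ ≤ 1) (f : ℤ → ℂ) :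
    l2NormSq (cmvLApply α f) = l2NormSq f := by
  simp only [l2NormSq_eq_tsum_pairs 0, add_zero]
  refine tsum_congr fun m => ?_
  rw [cmvLApply_two_mul, cmvLApply_two_mul_add_one, norm_sq_add_norm_sq_block,
    cmvRho_sq α (hα _ (even_two_mul m)), add_sub_cancel, one_mul]

lemma l2NormSq_cmvMApply_sub_le (α β f : ℤ → ℂ) {C : ℝ}
    (hblock : ∀ m, (f (2 * m + 1) ≠ 0 ∨ f (2 * m + 2) ≠ 0) →
      ‖α (2 * m + 1) - β (2 * m + 1)‖ ^ 2 + (cmvRho α (2 * m + 1) - cmvRho β (2 * m + 1)) ^ 2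
        ≤ C ^ 2) :
    l2NormSq (cmvMApply α f - cmvMApply β f) ≤ ENNReal.ofReal (C ^ 2) * l2NormSq f := by
  simp only [l2NormSq_eq_tsum_pairs 1, add_assoc, one_add_one_eq_two, ← ENNReal.tsum_mul_left,
    ← ENNReal.ofReal_mul (sq_nonneg C)]
  refine ENNReal.tsum_le_tsum fun m => ENNReal.ofReal_le_ofReal ?_
  set a := α (2 * m + 1) - β (2 * m + 1)
  set r := cmvRho α (2 * m + 1) - cmvRho β (2 * m + 1)
  have hblock_eq : ‖(cmvMApply α f - cmvMApply β f) (2 * m + 1)‖ ^ 2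
      + ‖(cmvMApply α f - cmvMApply β f) (2 * m + 2)‖ ^ 2
      = (‖a‖ ^ 2 + r ^ 2) * (‖f (2 * m + 1)‖ ^ 2 + ‖f (2 * m + 2)‖ ^ 2) := by
    rw [← norm_sq_add_norm_sq_block]
    simp only [Pi.sub_apply, cmvMApply_two_mul_add_one, cmvMApply_two_mul_add_two, a, r, map_sub]
    push_cast
    ring_nf
  rw [hblock_eq]
  by_cases hf : f (2 * m + 1) ≠ 0 ∨ f (2 * m + 2) ≠ 0
  · exact mul_le_mul_of_nonneg_right (hblock m hf) (by positivity)
  · obtain ⟨h1, h2⟩ := not_or.1 hf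
    simp [not_not.1 h1, not_not.1 h2]

theorem norm_apply_sub_apply_le_of_isECMV {α β : ℤ → ℂ} {E F : l2Z →L[ℂ] l2Z}
    (hE : IsECMV α E) (hF : IsECMV β F) (heven : ∀ n, Even n → α n = β n)
    (hdisk : ∀ n, Even n → ‖α n‖ ≤ 1) {C : ℝ} (hC : 0 ≤ C) (ψ : l2Z)
    (hblock : ∀ m, (ψ (2 * m + 1) ≠ 0 ∨ ψ (2 * m + 2) ≠ 0) →
      ‖α (2 * m + 1) - β (2 * m + 1)‖ ^ 2 + (cmvRho α (2 * m + 1) - cmvRho β (2 * m + 1)) ^ 2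
        ≤ C ^ 2) :
    ‖E ψ - F ψ‖ ≤ C * ‖ψ‖ := by
  have hpt : ⇑(E ψ - F ψ) = cmvLApply α (cmvMApply α ψ - cmvMApply β ψ) := by
    ext n
    rw [lp.coeFn_sub, Pi.sub_apply, hE.2, hF.2, cmvLApply_congr (fun n hn => (heven n hn).symm),
      ← Pi.sub_apply (cmvLApply α _), cmvLApply_sub]
  have hsq : ENNReal.ofReal (‖E ψ - F ψ‖ ^ 2) ≤ ENNReal.ofReal ((C * ‖ψ‖) ^ 2) := by
    rw [← l2NormSq_coe, hpt, l2NormSq_cmvLApply hdisk, mul_pow,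
      ENNReal.ofReal_mul (sq_nonneg C), ← l2NormSq_coe]
    exact l2NormSq_cmvMApply_sub_le α β ψ hblock
  rw [ENNReal.ofReal_le_ofReal_iff (by positivity)] at hsq
  exact (pow_le_pow_iff_left₀ (norm_nonneg _) (by positivity) two_ne_zero).1 hsq

lemma support_subset_Icc_of_local {T : (ℤ → ℂ) → ℤ → ℂ}
    (hT : ∀ f n, f (n - 1) = 0 → f n = 0 → f (n + 1) = 0 → T f n = 0)
    {f : ℤ → ℂ} {N : ℤ} (hf : f.support ⊆ Set.Icc (-N) N) :
    (T f).support ⊆ Set.Icc (-(N + 1)) (N + 1) := by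
  intro n hn
  by_contra hout
  have hz : ∀ k, n - 1 ≤ k → k ≤ n + 1 → f k = 0 := fun k h1 h2 =>
    Function.notMem_support.1 fun hk => hout (by
      have := hf hk
      simp only [Set.mem_Icc] at this ⊢
      omega)
  exact hn (hT f n (hz _ le_rfl (by omega)) (hz _ (by omega) (by omega)) (hz _ (by omega) le_rfl))

lemma support_isECMV_apply_subset {α : ℤ → ℂ} {E : l2Z →L[ℂ] l2Z} (hE : IsECMV α E)
    {ψ : l2Z} {N : ℤ} (hψ : Function.support ψ ⊆ Set.Icc (-N) N) :
    Function.support (E ψ) ⊆ Set.Icc (-(N + 2)) (N + 2) := by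
  have hM : ∀ f n, f (n - 1) = 0 → f n = 0 → f (n + 1) = 0 → cmvMApply α f n = 0 := by
    intro f n hl hc hr
    simp [cmvMApply, hl, hc, hr]
  have hL : ∀ f n, f (n - 1) = 0 → f n = 0 → f (n + 1) = 0 → cmvLApply α f n = 0 := by
    intro f n hl hc hr
    simp [cmvLApply, hl, hc, hr]
  rw [show ⇑(E ψ) = cmvLApply α (cmvMApply α ψ) from funext (hE.2 ψ),
    show N + 2 = N + 1 + 1 by ring]
  exact support_subset_Icc_of_local hL (support_subset_Icc_of_local hM hψ)

lemma support_pow_apply_deltaVec_subset {α : ℤ → ℂ} {E : l2Z →L[ℂ] l2Z} (hE : IsECMV α E)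
    (k : ℕ) : Function.support ((E ^ k) (deltaVec 0)) ⊆ Set.Icc (-(2 * k : ℤ)) (2 * k) := by
  induction k with
  | zero =>
    intro n hn
    simp_all [deltaVec, lp.single_apply, Pi.single_apply]
  | succ k ih =>
    rw [pow_succ', mul_apply_eq_comp]
    convert support_isECMV_apply_subset hE ih using 2 <;> push_cast <;> ring

lemma norm_deltaVec (n : ℤ) : ‖deltaVec n‖ = 1 := by
  simp [deltaVec, lp.norm_single]

lemma norm_pow_apply_sub_pow_apply_le {R V : Type*} [Semiring R] [SeminormedAddCommGroup V]
    [Module R V] (A B : V →L[R] V) (hA : ∀ v, ‖A v‖ ≤ ‖v‖) (x : V) {C : ℝ} {t : ℕ}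
    (hstep : ∀ k < t, ‖A ((B ^ k) x) - B ((B ^ k) x)‖ ≤ C) :
    ‖(A ^ t) x - (B ^ t) x‖ ≤ t * C := by
  induction t with
  | zero => simp
  | succ t ih =>
    have htele : (A ^ (t + 1)) x - (B ^ (t + 1)) x
        = A ((A ^ t) x - (B ^ t) x) + (A ((B ^ t) x) - B ((B ^ t) x)) := by
      simp only [pow_succ', mul_apply_eq_comp, map_sub]
      abel
    calc ‖(A ^ (t + 1)) x - (B ^ (t + 1)) x‖
        ≤ ‖(A ^ t) x - (B ^ t) x‖ + ‖A ((B ^ t) x) - B ((B ^ t) x)‖ := by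
          rw [htele]; exact (norm_add_le _ _).trans (by gcongr; exact hA _)
      _ ≤ t * C + C := add_le_add (ih fun k hk => hstep k (by omega)) (hstep t (by omega))
      _ = (t + 1 : ℕ) * C := by push_cast; ring

section UAMO

variable (lam1 lam2 theta : ℝ) (beta0 beta1 : ℂ)

lemma uamoAlpha_eq_of_even (Phi1 Phi2 : ℝ) {n : ℤ} (hn : Even n) :
    uamoAlpha lam1 lam2 Phi1 theta beta0 beta1 n
      = uamoAlpha lam1 lam2 Phi2 theta beta0 beta1 n := by
  have hn1 : n ≠ 1 := by rintro rfl; exact Int.not_even_one hn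
  simp [uamoAlpha, hn1, Int.not_odd_iff_even.2 hn]

lemma norm_uamoAlpha_le_one_of_even (Phi : ℝ) (hb0 : ‖beta0‖ ≤ 1) {n : ℤ} (hn : Even n) :
    ‖uamoAlpha lam1 lam2 Phi theta beta0 beta1 n‖ ≤ 1 := by
  have hn1 : n ≠ 1 := by rintro rfl; exact Int.not_even_one hn
  unfold uamoAlpha
  split_ifs with hn0 hodd
  · exact hb0
  · exact absurd hn (Int.not_even_iff_odd.2 hodd)
  · rw [Complex.norm_real, Real.norm_of_nonneg (Real.sqrt_nonneg _), Real.sqrt_le_one]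
    nlinarith

lemma uamoAlpha_two_mul_add_one (Phi : ℝ) {m : ℤ} (hm : m ≠ 0) :
    uamoAlpha lam1 lam2 Phi theta beta0 beta1 (2 * m + 1)
      = ((lam2 * Real.sin (2 * Real.pi * ((m + 1 : ℝ) * Phi + theta)) : ℝ) : ℂ) := by
  have hodd : Odd (2 * m + 1) := odd_two_mul_add_one m
  have hdiv : (2 * m + 1 + 1) / 2 = m + 1 := by omega
  simp [uamoAlpha, hm, hodd, hdiv, show 2 * m + 1 ≠ 0 by omega]

lemma uamoAlpha_odd_block_le (Phi1 Phi2 : ℝ) (hlam2 : 0 ≤ lam2) (hlam2' : lam2 < 1) {m : ℤ} {s : ℝ}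
    (hm : |(m : ℝ) + 1| ≤ s) :
    ‖uamoAlpha lam1 lam2 Phi1 theta beta0 beta1 (2 * m + 1)
        - uamoAlpha lam1 lam2 Phi2 theta beta0 beta1 (2 * m + 1)‖ ^ 2
      + (cmvRho (uamoAlpha lam1 lam2 Phi1 theta beta0 beta1) (2 * m + 1)
        - cmvRho (uamoAlpha lam1 lam2 Phi2 theta beta0 beta1) (2 * m + 1)) ^ 2
      ≤ (2 * Real.pi * lam2 * |Phi1 - Phi2| * s) ^ 2 := by
  rcases eq_or_ne m 0 with rfl | hm0
  · simp [cmvRho, uamoAlpha]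
    positivity
  have hscale : (2 * Real.pi * lam2 * (m + 1) * (Phi1 - Phi2)) ^ 2
      ≤ (2 * Real.pi * lam2 * |Phi1 - Phi2| * s) ^ 2 := by
    rw [← sq_abs]
    gcongr
    simp only [abs_mul, abs_two, abs_of_nonneg Real.pi_pos.le, abs_of_nonneg hlam2]
    rw [mul_right_comm]
    gcongr
  simp only [cmvRho, uamoAlpha_two_mul_add_one _ _ _ _ _ _ hm0, Complex.norm_real,
    Real.norm_eq_abs, sq_abs, ← Complex.ofReal_sub]
  refine (sq_sub_sin_add_sq_sub_sqrt_le _ _ _ (by nlinarith)).trans (le_of_eq_of_le ?_ hscale)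
  ring

end UAMO

lemma abs_add_one_le_of_support_subset {ψ : ℤ → ℂ} {k : ℤ}
    (hψ : ψ.support ⊆ Set.Icc (-(2 * k)) (2 * k)) {m : ℤ}
    (hm : ψ (2 * m + 1) ≠ 0 ∨ ψ (2 * m + 2) ≠ 0) : |m + 1| ≤ k := by
  rw [abs_le]
  rcases hm with hm | hm <;>
  · have := hψ hm
    simp only [Set.mem_Icc] at this
    omega

theorem stmt_13_general
    (lam1 lam2 : ℝ) (h1 : 0 ≤ lam1) (h12 : lam1 < lam2) (h2 : lam2 < 1)
    (Phi1 Phi2 : ℝ) (t : ℕ) :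
    ∀ theta : ℝ, ∀ beta0 beta1 : ℂ, ‖beta0‖ < 1 → ‖beta1‖ < 1 →
      ∀ E1 E2 : l2Z →L[ℂ] l2Z,
        IsECMV (uamoAlpha lam1 lam2 Phi1 theta beta0 beta1) E1 →
        IsECMV (uamoAlpha lam1 lam2 Phi2 theta beta0 beta1) E2 →
        ‖(E1 ^ t) (deltaVec 0) - (E2 ^ t) (deltaVec 0)‖ ≤
          2 * Real.pi * lam2 * |Phi1 - Phi2| * (t : ℝ) ^ 2 := by
  intro theta beta0 beta1 hb0 _ E1 E2 hE1 hE2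
  have hlam2 : 0 ≤ lam2 := h1.trans h12.le
  set C := 2 * Real.pi * lam2 * |Phi1 - Phi2| * t
  have hC : 0 ≤ C := by positivity
  have hstep : ∀ k < t, ‖E1 ((E2 ^ k) (deltaVec 0)) - E2 ((E2 ^ k) (deltaVec 0))‖ ≤ C := by
    intro k hk
    have hnorm : ‖(E2 ^ k) (deltaVec 0)‖ = 1 := by
      rw [ContinuousLinearMap.norm_map_of_mem_unitary (pow_mem hE2.1 k), norm_deltaVec]
    refine (norm_apply_sub_apply_le_of_isECMV hE1 hE2 (fun n => uamoAlpha_eq_of_even _ _ _ _ _ _ _)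
      (fun n => norm_uamoAlpha_le_one_of_even _ _ _ _ _ _ hb0.le) hC _
      fun m hm => ?_).trans_eq (by rw [hnorm, mul_one])
    refine uamoAlpha_odd_block_le _ _ _ _ _ _ _ hlam2 h2 ?_
    exact_mod_cast (abs_add_one_le_of_support_subset
      (support_pow_apply_deltaVec_subset hE2 k) hm).trans (by omega)
  calc ‖(E1 ^ t) (deltaVec 0) - (E2 ^ t) (deltaVec 0)‖
      ≤ t * C := norm_pow_apply_sub_pow_apply_le E1 E2
        (fun v => (ContinuousLinearMap.norm_map_of_mem_unitary hE1.1 v).le) _ hstep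
    _ = 2 * Real.pi * lam2 * |Phi1 - Phi2| * (t : ℝ) ^ 2 := by ring

/-- Fix `0 ≤ λ₁ < λ₂ < 1`.  For all `Φ₁, Φ₂ ∈ ℝ` and every positive integer
`t`, uniformly over `θ ∈ ℝ` and `β₀, β₁ ∈ 𝔻`, one has
`‖E_{Φ₁,θ,β₀,β₁}ᵗ δ₀ - E_{Φ₂,θ,β₀,β₁}ᵗ δ₀‖ ≤ 2πλ₂|Φ₁ - Φ₂|·t²`. -/
theorem stmt_13
    (lam1 lam2 : ℝ) (h1 : 0 ≤ lam1) (h12 : lam1 < lam2) (h2 : lam2 < 1)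
    (Phi1 Phi2 : ℝ) (t : ℕ) (ht : 0 < t) :
    ∀ theta : ℝ, ∀ beta0 beta1 : ℂ, ‖beta0‖ < 1 → ‖beta1‖ < 1 →
      ∀ E1 E2 : l2Z →L[ℂ] l2Z,
        IsECMV (uamoAlpha lam1 lam2 Phi1 theta beta0 beta1) E1 →
        IsECMV (uamoAlpha lam1 lam2 Phi2 theta beta0 beta1) E2 →
        ‖(E1 ^ t) (deltaVec 0) - (E2 ^ t) (deltaVec 0)‖ ≤
          2 * Real.pi * lam2 * |Phi1 - Phi2| * (t : ℝ) ^ 2 :=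
  stmt_13_general lam1 lam2 h1 h12 h2 Phi1 Phi2 t

end
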